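/- Under H1, H2, H3 and the exponent condition (p⁻ > q⁺+1, λ > 0, or p⁻ = q⁺+1 with λ < C₁h⁻(q⁻+1)/(p⁺a⁺c_{q⁺+1})), any family {x_{u_n}} of solutions to the discrete anisotropic Dirichlet problem corresponding to any sequence of parameters {u_n} is bounded in H: there exists γ > 0 with ‖x_{u_n}‖ ≤ γ for all n. -/

import Mathlib

/-! Testing the equation against the solution itself (summation by parts, using the zero boundary
values) gives the energy identity `∑ h(k-1) |Δx(k-1)|^p(k-1) = λ ∑ f(k, x k, u k) x k`. Coercivity
bounds the left side below by `h⁻ (C₁ ‖x‖^p⁻ - C₂)`, while the growth condition and the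
`(q⁺+1)`-Poincaré inequality bound the right side by `λ a⁺ c ‖x‖^(q⁺+1) + O(‖x‖)`, uniformly in the
parameters `u`. If `p⁻ > q⁺+1` the left side dominates for large `‖x‖`; if `p⁻ = q⁺+1`, the bound on
`λ` forces `λ a⁺ c < C₁ h⁻` because `q⁻+1 ≤ p⁺`, so it still dominates. -/

open Finset

noncomputable def diffNorm (T : ℕ) (y : ℕ → ℝ) : ℝ :=
  (∑ k ∈ Icc 1 (T + 1), (y k - y (k - 1)) ^ 2) ^ ((1 : ℝ) / 2)

theorem Finset.sum_rpow_le_rpow_sum {ι : Type*} (s : Finset ι) {g : ι → ℝ}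
    (hg : ∀ i ∈ s, 0 ≤ g i) {e : ℝ} (he : 1 ≤ e) :
    ∑ i ∈ s, g i ^ e ≤ (∑ i ∈ s, g i) ^ e := by
  have hS : 0 ≤ ∑ i ∈ s, g i := sum_nonneg hg
  have hsplit : ∀ t : ℝ, 0 ≤ t → t ^ e = t ^ (e - 1) * t := fun t ht => by
    simpa using Real.rpow_add_one' ht (y := e - 1) (by simp; linarith)
  calc ∑ i ∈ s, g i ^ e ≤ ∑ i ∈ s, (∑ j ∈ s, g j) ^ (e - 1) * g i := by
        refine sum_le_sum fun i hi => ?_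
        rw [hsplit _ (hg i hi)]
        gcongr
        exacts [hg i hi, hg i hi, single_le_sum hg hi]
    _ = (∑ i ∈ s, g i) ^ e := by rw [← mul_sum, hsplit _ hS]

theorem abs_rpow_sub_two_mul_self_mul_self (t : ℝ) {r : ℝ} (hr : r ≠ 0) :
    |t| ^ (r - 2) * t * t = |t| ^ r := by
  rcases eq_or_ne t 0 with rfl | ht
  · simp [Real.zero_rpow hr]
  · rw [mul_assoc, ← abs_mul_abs_self t, ← mul_assoc, ← Real.rpow_add_one (abs_ne_zero.2 ht),
      ← Real.rpow_add_one (abs_ne_zero.2 ht)]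
    ring_nf

theorem rpow_le_rpow_add_one {t q Q : ℝ} (ht : 0 ≤ t) (hq : 0 ≤ q) (hqQ : q ≤ Q) :
    t ^ q ≤ t ^ Q + 1 := by
  rcases le_or_gt t 1 with ht1 | ht1
  · linarith [Real.rpow_le_one ht ht1 hq, Real.rpow_nonneg ht Q]
  · linarith [Real.rpow_le_rpow_of_exponent_le ht1.le hqQ]

theorem sum_Icc_one_eq_sum_range (m : ℕ) (g : ℕ → ℝ) :
    ∑ k ∈ Icc 1 m, g k = ∑ j ∈ range m, g (j + 1) := by
  rw [← Ico_add_one_right_eq_Icc, sum_Ico_eq_sum_range]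
  exact sum_congr rfl fun j _ => by rw [Nat.add_comm]

theorem sum_Icc_mul_sub_eq_of_boundary (T : ℕ) (φ X : ℕ → ℝ) (hX0 : X 0 = 0)
    (hXT : X (T + 1) = 0) :
    ∑ k ∈ Icc 1 (T + 1), φ (k - 1) * (X k - X (k - 1)) =
      ∑ k ∈ Icc 1 T, (φ (k - 1) - φ k) * X k := by
  simp only [sum_Icc_one_eq_sum_range, Nat.add_sub_cancel, mul_sub, sum_sub_distrib]
  rw [sum_range_succ (fun j => φ j * X (j + 1)), sum_range_succ' (fun j => φ j * X j), hXT, hX0]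
  simp only [sub_mul, sum_sub_distrib]
  ring

theorem diffNorm_nonneg (T : ℕ) (y : ℕ → ℝ) : 0 ≤ diffNorm T y :=
  Real.rpow_nonneg (sum_nonneg fun _ _ => sq_nonneg _) _

theorem abs_sub_le_diffNorm (T : ℕ) (y : ℕ → ℝ) {k : ℕ} (hk : k ∈ Icc 1 (T + 1)) :
    |y k - y (k - 1)| ≤ diffNorm T y := by
  rw [diffNorm, ← Real.sqrt_eq_rpow, ← Real.sqrt_sq_eq_abs]
  exact Real.sqrt_le_sqrt
    (single_le_sum (f := fun k => (y k - y (k - 1)) ^ 2) (fun _ _ => sq_nonneg _) hk)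

theorem abs_le_mul_diffNorm (T : ℕ) (y : ℕ → ℝ) (hy0 : y 0 = 0) {k : ℕ} (hk : k ≤ T + 1) :
    |y k| ≤ (T + 1) * diffNorm T y := by
  have htel : y k = ∑ j ∈ range k, (y (j + 1) - y j) := by
    rw [sum_range_sub y k, hy0, sub_zero]
  calc |y k| ≤ ∑ j ∈ range k, |y (j + 1) - y j| := htel ▸ abs_sum_le_sum_abs _ _
    _ ≤ ∑ j ∈ range k, diffNorm T y := sum_le_sum fun j hj => by
        simpa using abs_sub_le_diffNorm T y (k := j + 1)
          (by simp only [mem_Icc, mem_range] at hj ⊢; omega)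
    _ ≤ (T + 1) * diffNorm T y := by
        rw [sum_const, card_range, nsmul_eq_mul]
        gcongr
        · exact diffNorm_nonneg T y
        · exact_mod_cast hk

theorem sum_abs_rpow_le_diffNorm_rpow (T : ℕ) (y : ℕ → ℝ) {r : ℝ} (hr : 2 ≤ r) :
    ∑ k ∈ Icc 1 (T + 1), |y k - y (k - 1)| ^ r ≤ diffNorm T y ^ r := by
  have hsq : ∀ t : ℝ, |t| ^ r = (t ^ 2) ^ (r / 2) := fun t => by
    rw [← sq_abs, ← Real.rpow_natCast, ← Real.rpow_mul (abs_nonneg t)]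
    norm_num [mul_div_cancel₀]
  simp only [hsq]
  calc _ ≤ (∑ k ∈ Icc 1 (T + 1), (y k - y (k - 1)) ^ 2) ^ (r / 2) :=
        sum_rpow_le_rpow_sum _ (fun _ _ => sq_nonneg _) (by linarith)
    _ = diffNorm T y ^ r := by
        rw [diffNorm, ← Real.rpow_mul (sum_nonneg fun _ _ => sq_nonneg _)]
        ring_nf

theorem sum_weighted_rpow_eq_of_solution (T : ℕ) (h p g x : ℕ → ℝ)
    (hp : ∀ k ∈ Icc 0 T, p k ≠ 0) (hx0 : x 0 = 0) (hxT : x (T + 1) = 0)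
    (heq : ∀ k ∈ Icc 1 T,
      -(h k * |x (k + 1) - x k| ^ (p k - 2) * (x (k + 1) - x k) -
          h (k - 1) * |x k - x (k - 1)| ^ (p (k - 1) - 2) * (x k - x (k - 1))) = g k) :
    ∑ k ∈ Icc 1 (T + 1), h (k - 1) * |x k - x (k - 1)| ^ p (k - 1) =
      ∑ k ∈ Icc 1 T, g k * x k := by
  set φ : ℕ → ℝ := fun j => h j * |x (j + 1) - x j| ^ (p j - 2) * (x (j + 1) - x j)
  calc _ = ∑ k ∈ Icc 1 (T + 1), φ (k - 1) * (x k - x (k - 1)) :=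
        sum_congr rfl fun k hk => by
          obtain ⟨hk1, hkT⟩ := mem_Icc.1 hk
          have hpk : p (k - 1) ≠ 0 := hp _ (mem_Icc.2 ⟨Nat.zero_le _, by omega⟩)
          simp only [φ, Nat.sub_add_cancel hk1, mul_assoc,
            ← abs_rpow_sub_two_mul_self_mul_self _ hpk]
    _ = ∑ k ∈ Icc 1 T, g k * x k := by
        rw [sum_Icc_mul_sub_eq_of_boundary T φ x hx0 hxT]
        exact sum_congr rfl fun k hk => by
          rw [← heq k hk]
          simp only [φ, Nat.sub_add_cancel (mem_Icc.1 hk).1]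
          ring

theorem mul_le_of_abs_le_growth {F t a b q A Q : ℝ} (hF : |F| ≤ a * |t| ^ q + b)
    (ha : 0 ≤ a) (haA : a ≤ A) (hq : 0 < q + 1) (hqQ : q ≤ Q) :
    F * t ≤ A * (|t| ^ (Q + 1) + 1) + b * |t| := by
  have hpow : |t| ^ (q + 1) ≤ |t| ^ (Q + 1) + 1 :=
    rpow_le_rpow_add_one (abs_nonneg t) hq.le (by linarith)
  calc F * t ≤ |F| * |t| := by rw [← abs_mul]; exact le_abs_self _
    _ ≤ (a * |t| ^ q + b) * |t| := by gcongr
    _ = a * |t| ^ (q + 1) + b * |t| := by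
        rw [Real.rpow_add_one' (abs_nonneg t) hq.ne']; ring
    _ ≤ A * (|t| ^ (Q + 1) + 1) + b * |t| := by
        gcongr
        exact ha.trans haA

theorem sum_mul_le_of_growth (T : ℕ) (F a b q x : ℕ → ℝ) {A Q c : ℝ}
    (hF : ∀ k ∈ Icc 1 T, |F k| ≤ a k * |x k| ^ q k + b k)
    (ha : ∀ k ∈ Icc 1 T, 0 ≤ a k) (haA : ∀ k ∈ Icc 1 T, a k ≤ A) (hA : 0 ≤ A)
    (hb : ∀ k ∈ Icc 1 T, 0 ≤ b k)
    (hq : ∀ k ∈ Icc 1 T, 0 < q k + 1) (hqQ : ∀ k ∈ Icc 1 T, q k ≤ Q) (hQ : 1 ≤ Q)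
    (hx0 : x 0 = 0) (hc : 0 ≤ c)
    (hx : ∑ k ∈ Icc 1 T, |x k| ^ (Q + 1) ≤
      c * ∑ k ∈ Icc 1 (T + 1), |x k - x (k - 1)| ^ (Q + 1)) :
    ∑ k ∈ Icc 1 T, F k * x k ≤
      A * c * diffNorm T x ^ (Q + 1) + A * T + (∑ k ∈ Icc 1 T, b k) * (T + 1) * diffNorm T x := by
  have hpow : ∑ k ∈ Icc 1 T, |x k| ^ (Q + 1) ≤ c * diffNorm T x ^ (Q + 1) :=
    hx.trans (by gcongr; exact sum_abs_rpow_le_diffNorm_rpow T x (by linarith))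
  calc ∑ k ∈ Icc 1 T, F k * x k
      ≤ ∑ k ∈ Icc 1 T, (A * (|x k| ^ (Q + 1) + 1) + b k * ((T + 1) * diffNorm T x)) :=
        sum_le_sum fun k hk => (mul_le_of_abs_le_growth (hF k hk) (ha k hk) (haA k hk)
          (hq k hk) (hqQ k hk)).trans (by
            gcongr
            exacts [hb k hk, abs_le_mul_diffNorm T x hx0 (Nat.le_succ_of_le (mem_Icc.1 hk).2)])
    _ = A * ∑ k ∈ Icc 1 T, |x k| ^ (Q + 1) + A * T +
          (∑ k ∈ Icc 1 T, b k) * (T + 1) * diffNorm T x := by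
        simp only [sum_add_distrib, mul_add, ← mul_sum, ← sum_mul, sum_const, Nat.card_Icc,
          nsmul_eq_mul]
        push_cast
        ring
    _ ≤ _ := by linarith [mul_le_mul_of_nonneg_left hpow hA]

theorem le_rpow_inv_of_mul_rpow_le {N c K P Q : ℝ} (hc : 0 < c) (hN : 1 ≤ N) (hQP : Q < P)
    (h : c * N ^ P ≤ K * N ^ Q) : N ≤ (K / c) ^ (P - Q)⁻¹ := by
  have hN0 : 0 < N := one_pos.trans_le hN
  have hsplit : N ^ P = N ^ (P - Q) * N ^ Q := by
    rw [← Real.rpow_add hN0, sub_add_cancel]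
  have hlt : c * N ^ (P - Q) ≤ K := le_of_mul_le_mul_right (by linarith [hsplit ▸ h])
    (Real.rpow_pos_of_pos hN0 Q)
  have hK : 0 ≤ K := le_trans (by positivity) hlt
  rw [Real.le_rpow_inv_iff_of_pos hN0.le (div_nonneg hK hc.le) (by linarith), le_div_iff₀ hc]
  linarith

theorem exists_pos_bound_of_growth_inequality {ι : Type*} (N : ι → ℝ) {c G D E P Q : ℝ}
    (hc : 0 < c) (hD : 0 ≤ D) (hE : 0 ≤ E) (hQ : 1 < Q)
    (hPQ : Q < P ∨ (P = Q ∧ G < c))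
    (hN : ∀ i, 1 ≤ N i → c * N i ^ P ≤ G * N i ^ Q + D + E * N i) :
    ∃ γ, 0 < γ ∧ ∀ i, N i ≤ γ := by
  obtain ⟨c', K, Q', hc', hQ'P, hK⟩ : ∃ c' K Q', 0 < c' ∧ Q' < P ∧
      ∀ i, 1 ≤ N i → c' * N i ^ P ≤ K * N i ^ Q' := by
    rcases hPQ with hQP | ⟨rfl, hGc⟩
    · refine ⟨c, G + D + E, Q, hc, hQP, fun i hi => ?_⟩
      have h1 : 1 ≤ N i ^ Q := Real.one_le_rpow hi (by linarith)
      have h2 : N i ≤ N i ^ Q := Real.self_le_rpow_of_one_le hi hQ.le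
      nlinarith [hN i hi]
    · refine ⟨c - G, D + E, 1, by linarith, hQ, fun i hi => ?_⟩
      rw [Real.rpow_one]
      nlinarith [hN i hi]
  refine ⟨max 1 ((K / c') ^ (P - Q')⁻¹), by positivity, fun i => ?_⟩
  rcases le_or_gt 1 (N i) with hi | hi
  · exact (le_rpow_inv_of_mul_rpow_le hc' hi hQ'P (hK i hi)).trans (le_max_right _ _)
  · exact hi.le.trans (le_max_left _ _)

theorem mul_mul_lt_of_lt_mul_div {lam a c C r s : ℝ} (hc : 0 < c) (hC : 0 < C) (hs : 0 < s)
    (ha : 0 ≤ a) (hrs : r ≤ s) (h : lam < C * r / (s * a * c)) : lam * a * c < C := by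
  rcases ha.eq_or_lt with rfl | ha
  · simpa using hC
  · rw [lt_div_iff₀ (by positivity)] at h
    have : s * (lam * a * c) < s * C := by nlinarith [mul_le_mul_of_nonneg_left hrs hC.le]
    exact lt_of_mul_lt_mul_left this hs.le

theorem stmt13_general (T : ℕ) (hT : 1 ≤ T)
    (h p : ℕ → ℝ) (hh : ∀ k ∈ Finset.Icc 0 T, 0 < h k) (hp : ∀ k ∈ Finset.Icc 0 T, 1 < p k)
    (hm pm pP : ℝ)
    (hhm : hm = (Finset.Icc 0 T).inf' (Finset.nonempty_Icc.mpr (Nat.zero_le T)) h)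
    (hpm : pm = (Finset.Icc 0 T).inf' (Finset.nonempty_Icc.mpr (Nat.zero_le T)) p)
    (hpP : pP = (Finset.Icc 0 T).sup' (Finset.nonempty_Icc.mpr (Nat.zero_le T)) p)
    (f : ℕ → ℝ → ℝ → ℝ)
    -- H1
    (a b q : ℕ → ℝ)
    (ha : ∀ k ∈ Finset.Icc 1 T, 0 ≤ a k) (hb : ∀ k ∈ Finset.Icc 1 T, 0 ≤ b k)
    (hq : ∀ k ∈ Finset.Icc 1 T, 1 < q k)
    (hgrowth : ∀ k ∈ Finset.Icc 1 T, ∀ t v : ℝ, |f k t v| ≤ a k * |t| ^ q k + b k)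
    (aP qP qm : ℝ)
    (haP : aP = (Finset.Icc 1 T).sup' (Finset.nonempty_Icc.mpr hT) a)
    (hqP : qP = (Finset.Icc 1 T).sup' (Finset.nonempty_Icc.mpr hT) q)
    (hqm : qm = (Finset.Icc 1 T).inf' (Finset.nonempty_Icc.mpr hT) q)
    (C₁ C₂ : ℝ) (hC₁ : 0 < C₁) (hC₂ : 0 < C₂)
    (hcoerc : ∀ x : ℕ → ℝ, x 0 = 0 → x (T + 1) = 0 →
      1 ≤ (∑ k ∈ Finset.Icc 1 (T + 1), (x k - x (k - 1)) ^ 2) ^ ((1 : ℝ) / 2) →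
      C₁ * ((∑ k ∈ Finset.Icc 1 (T + 1), (x k - x (k - 1)) ^ 2) ^ ((1 : ℝ) / 2)) ^ pm - C₂ ≤
        ∑ k ∈ Finset.Icc 1 (T + 1), |x k - x (k - 1)| ^ p (k - 1))
    (cQ : ℝ) (hcQpos : 0 < cQ)
    (hcQ : ∀ x : ℕ → ℝ, x 0 = 0 → x (T + 1) = 0 →
      ∑ k ∈ Finset.Icc 1 T, |x k| ^ (qP + 1) ≤
        cQ * ∑ k ∈ Finset.Icc 1 (T + 1), |x k - x (k - 1)| ^ (qP + 1))
    (lam : ℝ) (hlam0 : 0 < lam)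
    (hexp : qP + 1 < pm ∨ (pm = qP + 1 ∧ lam < C₁ * hm * (qm + 1) / (pP * aP * cQ)))
    (u : ℕ → ℕ → ℝ) (x : ℕ → ℕ → ℝ)
    (hsol : ∀ n : ℕ,
      x n 0 = 0 ∧ x n (T + 1) = 0 ∧ (∀ k, T + 1 < k → x n k = 0) ∧
      ∀ k ∈ Finset.Icc 1 T,
        -(h k * |x n (k + 1) - x n k| ^ (p k - 2) * (x n (k + 1) - x n k) -
            h (k - 1) * |x n k - x n (k - 1)| ^ (p (k - 1) - 2) * (x n k - x n (k - 1))) =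
          lam * f k (x n k) (u n k)) :
    ∃ γ : ℝ, 0 < γ ∧ ∀ n : ℕ,
      (∑ k ∈ Finset.Icc 1 (T + 1), (x n k - x n (k - 1)) ^ 2) ^ ((1 : ℝ) / 2) ≤ γ := by
  have h1T : 1 ∈ Icc 1 T := mem_Icc.2 ⟨le_rfl, hT⟩
  have h0T : 0 ∈ Icc 0 T := mem_Icc.2 ⟨le_rfl, Nat.zero_le T⟩
  have hhm0 : 0 < hm := hhm ▸ (lt_inf'_iff _).2 hh
  have haP0 : 0 ≤ aP := haP ▸ (ha 1 h1T).trans (le_sup' a h1T)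
  have hqP1 : 1 < qP := hqP ▸ (hq 1 h1T).trans_le (le_sup' q h1T)
  have hB : 0 ≤ ∑ k ∈ Icc 1 T, b k := sum_nonneg hb
  refine exists_pos_bound_of_growth_inequality (fun n => diffNorm T (x n))
    (P := pm) (Q := qP + 1) (G := lam * aP * cQ) (D := hm * C₂ + lam * aP * T)
    (E := lam * (∑ k ∈ Icc 1 T, b k) * (T + 1)) (mul_pos hhm0 hC₁)
    (add_nonneg (mul_pos hhm0 hC₂).le (mul_nonneg (mul_nonneg hlam0.le haP0) T.cast_nonneg))
    (mul_nonneg (mul_nonneg hlam0.le hB) (by positivity)) (by linarith)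
    ?_ fun n hn => ?_
  · refine hexp.imp_right fun ⟨hpmeq, hlam⟩ => ⟨hpmeq, ?_⟩
    have hqmqP : qm ≤ qP := hqm ▸ hqP ▸ (inf'_le q h1T).trans (le_sup' q h1T)
    have hpmpP : pm ≤ pP := hpm ▸ hpP ▸ (inf'_le p h0T).trans (le_sup' p h0T)
    have := mul_mul_lt_of_lt_mul_div hcQpos (mul_pos hC₁ hhm0) (by linarith) haP0
      (by linarith) hlam
    linarith
  · obtain ⟨hx0, hxT, -, heq⟩ := hsol n
    have henergy := sum_weighted_rpow_eq_of_solution T h p _ (x n)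
      (fun k hk => (one_pos.trans (hp k hk)).ne') hx0 hxT heq
    have hupper := sum_mul_le_of_growth T (fun k => f k (x n k) (u n k)) a b q (x n)
      (fun k hk => hgrowth k hk _ _) ha (fun k hk => haP ▸ le_sup' a hk) haP0 hb
      (fun k hk => by linarith [hq k hk]) (fun k hk => hqP ▸ le_sup' q hk) hqP1.le hx0
      hcQpos.le (hcQ (x n) hx0 hxT)
    have hweights : hm * ∑ k ∈ Icc 1 (T + 1), |x n k - x n (k - 1)| ^ p (k - 1) ≤
        ∑ k ∈ Icc 1 (T + 1), h (k - 1) * |x n k - x n (k - 1)| ^ p (k - 1) := by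
      rw [mul_sum]
      exact sum_le_sum fun k hk => mul_le_mul_of_nonneg_right
        (hhm ▸ inf'_le h (mem_Icc.2 ⟨Nat.zero_le _, by grind⟩)) (by positivity)
    have hcoerc' : C₁ * diffNorm T (x n) ^ pm - C₂ ≤ _ := hcoerc (x n) hx0 hxT hn
    simp only [mul_assoc, ← mul_sum] at henergy
    linarith [mul_le_mul_of_nonneg_left hupper hlam0.le,
      mul_le_mul_of_nonneg_left hcoerc' hhm0.le]

theorem stmt13 (T : ℕ) (hT : 1 ≤ T)
    (h p : ℕ → ℝ) (hh : ∀ k ∈ Finset.Icc 0 T, 0 < h k) (hp : ∀ k ∈ Finset.Icc 0 T, 1 < p k)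
    (hm pm pP : ℝ)
    (hhm : hm = (Finset.Icc 0 T).inf' (Finset.nonempty_Icc.mpr (Nat.zero_le T)) h)
    (hpm : pm = (Finset.Icc 0 T).inf' (Finset.nonempty_Icc.mpr (Nat.zero_le T)) p)
    (hpP : pP = (Finset.Icc 0 T).sup' (Finset.nonempty_Icc.mpr (Nat.zero_le T)) p)
    (f : ℕ → ℝ → ℝ → ℝ) (hcont : ∀ k v, Continuous fun t => f k t v)
    -- H1
    (a b q : ℕ → ℝ)
    (ha : ∀ k ∈ Finset.Icc 1 T, 0 ≤ a k) (hb : ∀ k ∈ Finset.Icc 1 T, 0 ≤ b k)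
    (hq : ∀ k ∈ Finset.Icc 1 T, 1 < q k)
    (hgrowth : ∀ k ∈ Finset.Icc 1 T, ∀ t v : ℝ, |f k t v| ≤ a k * |t| ^ q k + b k)
    -- H2
    (hantitone : ∀ k ∈ Finset.Icc 1 T, ∀ v : ℝ, Antitone fun t => f k t v)
    (aP qP qm : ℝ)
    (haP : aP = (Finset.Icc 1 T).sup' (Finset.nonempty_Icc.mpr hT) a)
    (hqP : qP = (Finset.Icc 1 T).sup' (Finset.nonempty_Icc.mpr hT) q)
    (hqm : qm = (Finset.Icc 1 T).inf' (Finset.nonempty_Icc.mpr hT) q)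
    (C₁ C₂ : ℝ) (hC₁ : 0 < C₁) (hC₂ : 0 < C₂)
    (hcoerc : ∀ x : ℕ → ℝ, x 0 = 0 → x (T + 1) = 0 →
      1 ≤ (∑ k ∈ Finset.Icc 1 (T + 1), (x k - x (k - 1)) ^ 2) ^ ((1 : ℝ) / 2) →
      C₁ * ((∑ k ∈ Finset.Icc 1 (T + 1), (x k - x (k - 1)) ^ 2) ^ ((1 : ℝ) / 2)) ^ pm - C₂ ≤
        ∑ k ∈ Finset.Icc 1 (T + 1), |x k - x (k - 1)| ^ p (k - 1))
    (cQ : ℝ) (hcQpos : 0 < cQ)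
    (hcQ : ∀ x : ℕ → ℝ, x 0 = 0 → x (T + 1) = 0 →
      ∑ k ∈ Finset.Icc 1 T, |x k| ^ (qP + 1) ≤
        cQ * ∑ k ∈ Finset.Icc 1 (T + 1), |x k - x (k - 1)| ^ (qP + 1))
    (lam : ℝ) (hlam0 : 0 < lam)
    (hexp : qP + 1 < pm ∨ (pm = qP + 1 ∧ lam < C₁ * hm * (qm + 1) / (pP * aP * cQ)))
    -- H3
    (hH3 : ∃ k₀ ∈ Finset.Icc 1 T, ∀ v : ℝ, f k₀ 0 v ≠ 0)
    (u : ℕ → ℕ → ℝ) (x : ℕ → ℕ → ℝ)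
    (hsol : ∀ n : ℕ,
      x n 0 = 0 ∧ x n (T + 1) = 0 ∧ (∀ k, T + 1 < k → x n k = 0) ∧
      ∀ k ∈ Finset.Icc 1 T,
        -(h k * |x n (k + 1) - x n k| ^ (p k - 2) * (x n (k + 1) - x n k) -
            h (k - 1) * |x n k - x n (k - 1)| ^ (p (k - 1) - 2) * (x n k - x n (k - 1))) =
          lam * f k (x n k) (u n k)) :
    ∃ γ : ℝ, 0 < γ ∧ ∀ n : ℕ,
      (∑ k ∈ Finset.Icc 1 (T + 1), (x n k - x n (k - 1)) ^ 2) ^ ((1 : ℝ) / 2) ≤ γ :=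
  stmt13_general T hT h p hh hp hm pm pP hhm hpm hpP f a b q ha hb hq hgrowth aP qP qm haP hqP hqm
    C₁ C₂ hC₁ hC₂ hcoerc cQ hcQpos hcQ lam hlam0 hexp u x hsol
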